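/- arXiv:1707.02612 — 5 statements merged into one kernel-verified Lean document; each statement's English description precedes it below -/
import Mathlib

section
/- Let δ ≥ 3, and let (δ, K₁, K₂, C₀, C₁) be integer parameters with C = min(C₀,C₁). Define a triangle (a,b,c) with 1 ≤ a ≤ b ≤ c ≤ δ to be allowed if it is metric (a + b ≥ c), if its perimeter p = a+b+c being odd implies 2K₁ < p and b + c < 2K₂ + a + 1, and if p < C₁ when p is odd and p < C₀ when p is even. Then an integer M with 1 ≤ M ≤ δ satisfies: for all 1 ≤ b ≤ δ the triangle (M, M, b) is allowed, if and only if max(K₁, ⌈δ/2⌉) ≤ M ≤ min(K₂, ⌊(C−δ−1)/2⌋). -/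
/-!
Both triangles `(b, M, M)` and `(M, M, b)` have perimeter `2M + b`, odd exactly when `b` is.
The base `b = 1` forces `K₁ ≤ M ≤ K₂`, the base `b = δ` forces `δ ≤ 2M`, and the consecutive
bases `δ - 1` and `δ`, one of each parity, force `2M + δ + 1 < C₀` and `2M + δ + 1 < C₁`
because `C₀` is even and `C₁` odd. Conversely these bounds make every base `b ≤ δ` allowed.
-/

/-- A triangle `(a,b,c)` with `a ≤ b ≤ c` (distances from `{1,…,δ}`) is *allowed* for
parameters `(K₁, K₂, C₀, C₁)`: it is metric, if its perimeter is odd then `2K₁ < p` and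
`b + c < 2K₂ + a + 1`, and `p < C₁` for odd `p`, `p < C₀` for even `p`. -/
def AllowedTriangle (K₁ K₂ C₀ C₁ a b c : ℕ) : Prop :=
  c ≤ a + b ∧
  (Odd (a + b + c) → 2 * K₁ < a + b + c ∧ b + c < 2 * K₂ + a + 1) ∧
  (Odd (a + b + c) → a + b + c < C₁) ∧
  (Even (a + b + c) → a + b + c < C₀)

def PerimeterBounded (C₀ C₁ p : ℕ) : Prop :=
  (Odd p → p < C₁) ∧ (Even p → p < C₀)

def IsoscelesAllowed (K₁ K₂ C₀ C₁ M b : ℕ) : Prop :=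
  (b ≤ M → AllowedTriangle K₁ K₂ C₀ C₁ b M M) ∧ (M ≤ b → AllowedTriangle K₁ K₂ C₀ C₁ M M b)

theorem isoscelesAllowed_iff {K₁ K₂ C₀ C₁ M b : ℕ} :
    IsoscelesAllowed K₁ K₂ C₀ C₁ M b ↔
      b ≤ 2 * M ∧ (Odd b → 2 * K₁ < 2 * M + b ∧ 2 * M ≤ 2 * K₂ + b ∧ b ≤ 2 * K₂) ∧
        PerimeterBounded C₀ C₁ (2 * M + b) := by
  have hodd : Odd (2 * M + b) ↔ Odd b := by simp [Nat.odd_add']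
  rw [IsoscelesAllowed, AllowedTriangle, AllowedTriangle, PerimeterBounded,
    show b + M + M = 2 * M + b by ring, show M + M + b = 2 * M + b by ring, hodd]
  rcases le_total b M with hbM | hMb
  · constructor
    · rintro ⟨h, -⟩
      obtain ⟨-, hK, hC₁, hC₀⟩ := h hbM
      exact ⟨by omega, fun hb => have := hK hb; ⟨this.1, by omega, by omega⟩, hC₁, hC₀⟩
    · rintro ⟨-, hK, hC₁, hC₀⟩
      exact ⟨fun _ => ⟨by omega, fun hb => have := hK hb; ⟨this.1, by omega⟩, hC₁, hC₀⟩,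
        fun _ => ⟨by omega, fun hb => have := hK hb; ⟨this.1, by omega⟩, hC₁, hC₀⟩⟩
  · constructor
    · rintro ⟨-, h⟩
      obtain ⟨hmetric, hK, hC₁, hC₀⟩ := h hMb
      exact ⟨by omega, fun hb => have := hK hb; ⟨this.1, by omega, by omega⟩, hC₁, hC₀⟩
    · rintro ⟨hmetric, hK, hC₁, hC₀⟩
      exact ⟨fun _ => ⟨by omega, fun hb => have := hK hb; ⟨this.1, by omega⟩, hC₁, hC₀⟩,
        fun _ => ⟨by omega, fun hb => have := hK hb; ⟨this.1, by omega⟩, hC₁, hC₀⟩⟩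

theorem add_two_le_min_of_perimeterBounded {C₀ C₁ n : ℕ} (hC₀ : Even C₀) (hC₁ : Odd C₁)
    (hn : PerimeterBounded C₀ C₁ n) (hn₁ : PerimeterBounded C₀ C₁ (n + 1)) :
    n + 2 ≤ min C₀ C₁ := by
  obtain ⟨c₀, rfl⟩ := hC₀
  obtain ⟨c₁, rfl⟩ := hC₁
  rcases Nat.even_or_odd n with ⟨k, rfl⟩ | ⟨k, rfl⟩
  · have := hn.2 ⟨k, rfl⟩
    have := hn₁.1 ⟨k, by ring⟩
    omega
  · have := hn.1 ⟨k, rfl⟩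
    have := hn₁.2 ⟨k + 1, by ring⟩
    omega

theorem perimeterBounded_of_lt_min {C₀ C₁ p : ℕ} (hp : p < min C₀ C₁) :
    PerimeterBounded C₀ C₁ p :=
  ⟨fun _ => by omega, fun _ => by omega⟩

theorem stmt0_general (δ K₁ K₂ C₀ C₁ : ℕ) (hδ : 3 ≤ δ)
    (hC₀e : Even C₀) (hC₁o : Odd C₁)
    (M : ℕ) :
    (∀ b, 1 ≤ b → b ≤ δ →
        (b ≤ M → AllowedTriangle K₁ K₂ C₀ C₁ b M M) ∧
        (M ≤ b → AllowedTriangle K₁ K₂ C₀ C₁ M M b)) ↔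
      (max K₁ ((δ + 1) / 2) ≤ M ∧ M ≤ min K₂ ((min C₀ C₁ - δ - 1) / 2)) := by
  change (∀ b, 1 ≤ b → b ≤ δ → IsoscelesAllowed K₁ K₂ C₀ C₁ M b) ↔ _
  simp only [isoscelesAllowed_iff]
  constructor
  · intro h
    obtain ⟨-, hK, -⟩ := h 1 le_rfl (by omega)
    obtain ⟨hK₁, hK₂, -⟩ := hK odd_one
    obtain ⟨hδM, -, hperδ⟩ := h δ (by omega) le_rfl
    obtain ⟨-, -, hperδ'⟩ := h (δ - 1) (by omega) (by omega)
    have hC := add_two_le_min_of_perimeterBounded hC₀e hC₁o hperδ'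
      (by rwa [show 2 * M + (δ - 1) + 1 = 2 * M + δ by omega])
    omega
  · rintro ⟨hlow, hhigh⟩ b hb hbδ
    exact ⟨by omega, fun _ => ⟨by omega, by omega, by omega⟩,
      perimeterBounded_of_lt_min (by omega)⟩

/-- Characterization of magic distances: `M` allows all triangles `(M,M,b)` iff
`max(K₁,⌈δ/2⌉) ≤ M ≤ min(K₂,⌊(C−δ−1)/2⌋)`. -/
theorem stmt0 (δ K₁ K₂ C₀ C₁ : ℕ) (hδ : 3 ≤ δ)
    (hK₁ : 1 ≤ K₁) (hK₁₂ : K₁ ≤ K₂) (hK₂ : K₂ ≤ 2 * δ)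
    (hC₀e : Even C₀) (hC₁o : Odd C₁)
    (hC₀l : 2 * δ < C₀) (hC₁l : 2 * δ < C₁)
    (hC₀u : C₀ ≤ 3 * δ + 2) (hC₁u : C₁ ≤ 3 * δ + 2)
    (M : ℕ) (hM1 : 1 ≤ M) (hMδ : M ≤ δ) :
    (∀ b, 1 ≤ b → b ≤ δ →
        (b ≤ M → AllowedTriangle K₁ K₂ C₀ C₁ b M M) ∧
        (M ≤ b → AllowedTriangle K₁ K₂ C₀ C₁ M M b)) ↔
      (max K₁ ((δ + 1) / 2) ≤ M ∧ M ≤ min K₂ ((min C₀ C₁ - δ - 1) / 2)) :=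
  stmt0_general δ K₁ K₂ C₀ C₁ hδ hC₀e hC₁o M
end

section
/- Let δ ≥ 3 and let (δ, K₁, K₂, C₀, C₁) be admissible parameters in Case III with K₁ + 2K₂ = 2δ − 1, i.e. additionally satisfying K₁ < ∞, C > 2δ + K₁, 3K₂ ≥ 2δ, and C ≥ 2δ + K₁ + 2 (where C = min(C₀,C₁)). Then K₁ < K₂, K₁ < 2δ/3, and there exists an integer M with K₁ < M and max(K₁, ⌈δ/2⌉) ≤ M ≤ min(K₂, ⌊(C−δ−1)/2⌋). -/
/-!
Since `2δ ≤ 3K₂`, the equation `K₁ + 2K₂ = 2δ − 1` gives `K₁ + 2K₂ < 3K₂`, hence `K₁ < K₂` and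
`3K₁ < K₁ + 2K₂ < 2δ`. The magic distance is `M = max (K₁ + 1) ⌈δ/2⌉`: it is at most `K₂`
because `⌈δ/2⌉ ≤ ⌈2δ/3⌉ ≤ K₂`, and at most `⌊(C − δ − 1)/2⌋` because `C ≥ 2δ + K₁ + 2` and `K₁ < δ`.
-/

theorem Nat.exists_lt_of_max_succ_le_min {a b c d : ℕ} (h : max (a + 1) b ≤ min c d) :
    ∃ M : ℕ, a < M ∧ max a b ≤ M ∧ M ≤ min c d :=
  ⟨max (a + 1) b, (Nat.lt_succ_self a).trans_le (le_max_left _ _),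
    max_le_max_right b (Nat.le_succ a), h⟩

theorem stmt1_general (δ K₁ K₂ C₀ C₁ : ℕ) (hδ : 3 ≤ δ)
    (heq : K₁ + 2 * K₂ = 2 * δ - 1)
    (h3K₂ : 2 * δ ≤ 3 * K₂)
    (hC2 : 2 * δ + K₁ + 2 ≤ min C₀ C₁) :
    K₁ < K₂ ∧ 3 * K₁ < 2 * δ ∧
      ∃ M : ℕ, K₁ < M ∧ max K₁ ((δ + 1) / 2) ≤ M ∧
        M ≤ min K₂ ((min C₀ C₁ - δ - 1) / 2) := by
  have hK₁K₂ : K₁ < K₂ := by omega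
  have h3K₁ : 3 * K₁ < 2 * δ := by omega
  refine ⟨hK₁K₂, h3K₁, Nat.exists_lt_of_max_succ_le_min ?_⟩
  have hceil : (δ + 1) / 2 ≤ K₂ := by omega
  have hK₁C : K₁ + 1 ≤ (min C₀ C₁ - δ - 1) / 2 := by omega
  have hceilC : (δ + 1) / 2 ≤ (min C₀ C₁ - δ - 1) / 2 := by omega
  exact max_le (le_min hK₁K₂ hK₁C) (le_min hceil hceilC)

/-- For admissible parameters in Case III with `K₁ + 2K₂ = 2δ − 1` (so in particular
`C > 2δ + K₁`, `3K₂ ≥ 2δ`, `C ≥ 2δ + K₁ + 2` where `C = min(C₀,C₁)`), one has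
`K₁ < K₂`, `K₁ < 2δ/3`, and there exists a magic distance `M` with `K₁ < M`. -/
theorem stmt1 (δ K₁ K₂ C₀ C₁ : ℕ) (hδ : 3 ≤ δ)
    (hK₁ : 1 ≤ K₁) (hK₁₂ : K₁ ≤ K₂) (hK₂ : K₂ ≤ 2 * δ)
    (hC : 2 * δ + K₁ < min C₀ C₁)
    (heq : K₁ + 2 * K₂ = 2 * δ - 1)
    (h3K₂ : 2 * δ ≤ 3 * K₂)
    (hC2 : 2 * δ + K₁ + 2 ≤ min C₀ C₁) :
    K₁ < K₂ ∧ 3 * K₁ < 2 * δ ∧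
      ∃ M : ℕ, K₁ < M ∧ max K₁ ((δ + 1) / 2) ≤ M ∧
        M ≤ min K₂ ((min C₀ C₁ - δ - 1) / 2) :=
  stmt1_general δ K₁ K₂ C₀ C₁ hδ heq h3K₂ hC2
end

section
/- Let δ ≥ 3, let M satisfy ⌊δ/2⌋ ≤ M and M + 1 ≤ ⌊(C₀−δ−1)/2⌋ where C₀ > 2δ+3 is even (the bipartite magic condition). Then M is characterized by: for all even b with 2 ≤ b ≤ δ, the triangles (M, M, b) and (M+1, M+1, b) are metric with perimeter < C₀, and for all odd b with 1 ≤ b ≤ δ, the triangle (M, M+1, b) is metric with perimeter < C₀. -/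
/-- `(x,y,z)` satisfies all three triangle inequalities. -/
def TriMetric (x y z : ℕ) : Prop := x ≤ y + z ∧ y ≤ x + z ∧ z ≤ x + y

/-! Both conditions are monotone in `b`, so only the largest admissible `b`, namely `b = δ`, matters.
Rewritten without floors, the magic bounds say `δ ≤ 2M + 1` and `2M + δ + 3 ≤ C₀`; the triangle at
`b = δ` gives the first directly and the second up to one unit, which the parity of `C₀` supplies. -/

theorem TriMetric.self_self_iff {a b : ℕ} : TriMetric a a b ↔ b ≤ a + a := by
  unfold TriMetric
  omega

theorem TriMetric.self_succ_iff {a b : ℕ} (hb : 1 ≤ b) : TriMetric a (a + 1) b ↔ b ≤ a + (a + 1) := by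
  unfold TriMetric
  omega

theorem Nat.add_two_le_of_lt_of_even {m n : ℕ} (hm : Even m) (hn : Even n) (h : m < n) :
    m + 2 ≤ n := by
  obtain ⟨k, rfl⟩ := hm
  obtain ⟨l, rfl⟩ := hn
  omega

def MagicTriangles (δ C₀ M : ℕ) : Prop :=
  (∀ b, 2 ≤ b → b ≤ δ → Even b →
      (TriMetric M M b ∧ M + M + b < C₀) ∧
      (TriMetric (M + 1) (M + 1) b ∧ (M + 1) + (M + 1) + b < C₀)) ∧
    (∀ b, 1 ≤ b → b ≤ δ → Odd b →
      TriMetric M (M + 1) b ∧ M + (M + 1) + b < C₀)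

theorem magic_bounds_iff (δ C₀ M : ℕ) :
    (δ / 2 ≤ M ∧ M + 1 ≤ (C₀ - δ - 1) / 2) ↔ δ ≤ 2 * M + 1 ∧ 2 * M + δ + 3 ≤ C₀ := by
  omega

theorem magicTriangles_of_bounds {δ C₀ M : ℕ} (hδ : δ ≤ 2 * M + 1) (hC₀ : 2 * M + δ + 3 ≤ C₀) :
    MagicTriangles δ C₀ M := by
  refine ⟨fun b _ hbδ hb => ⟨⟨?_, by omega⟩, ?_, by omega⟩, fun b hb1 hbδ _ => ⟨?_, by omega⟩⟩
  · obtain ⟨k, rfl⟩ := hb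
    exact TriMetric.self_self_iff.2 (by omega)
  · exact TriMetric.self_self_iff.2 (by omega)
  · exact (TriMetric.self_succ_iff hb1).2 (by omega)

theorem bounds_of_magicTriangles {δ C₀ M : ℕ} (hδ : 1 ≤ δ) (hC₀ : Even C₀)
    (h : MagicTriangles δ C₀ M) : δ ≤ 2 * M + 1 ∧ 2 * M + δ + 3 ≤ C₀ := by
  obtain ⟨hEven, hOdd⟩ := h
  rcases Nat.even_or_odd δ with hδe | hδo
  · obtain ⟨⟨htri, -⟩, -, hper⟩ := hEven δ (by obtain ⟨k, rfl⟩ := hδe; omega) le_rfl hδe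
    have hδM := TriMetric.self_self_iff.1 htri
    have hMC := Nat.add_two_le_of_lt_of_even (Even.add ⟨M + 1, rfl⟩ hδe) hC₀ hper
    omega
  · obtain ⟨htri, hper⟩ := hOdd δ hδ le_rfl hδo
    have hδM := (TriMetric.self_succ_iff hδ).1 htri
    have hMC := Nat.add_two_le_of_lt_of_even (Odd.add_odd ⟨M, by ring⟩ hδo) hC₀ hper
    omega

theorem stmt10_general (δ C₀ M : ℕ) (hδ : 3 ≤ δ) (hC₀e : Even C₀) :
    (δ / 2 ≤ M ∧ M + 1 ≤ (C₀ - δ - 1) / 2) ↔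
      ((∀ b, 2 ≤ b → b ≤ δ → Even b →
          (TriMetric M M b ∧ M + M + b < C₀) ∧
          (TriMetric (M + 1) (M + 1) b ∧ (M + 1) + (M + 1) + b < C₀)) ∧
       (∀ b, 1 ≤ b → b ≤ δ → Odd b →
          TriMetric M (M + 1) b ∧ M + (M + 1) + b < C₀)) := by
  rw [magic_bounds_iff]
  exact ⟨fun ⟨hδM, hMC⟩ => magicTriangles_of_bounds hδM hMC,
    bounds_of_magicTriangles (by omega) hC₀e⟩

/-- Characterization of bipartite magic distances for `A^δ_{∞,0,C₀,2δ+1}`: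
`⌊δ/2⌋ ≤ M` and `M + 1 ≤ ⌊(C₀−δ−1)/2⌋` iff for all even `2 ≤ b ≤ δ` the triangles
`(M,M,b)` and `(M+1,M+1,b)` are metric with perimeter `< C₀`, and for all odd
`1 ≤ b ≤ δ` the triangle `(M,M+1,b)` is metric with perimeter `< C₀`. -/
theorem stmt10 (δ C₀ M : ℕ) (hδ : 3 ≤ δ) (hC₀e : Even C₀) (hC₀ : 2 * δ + 3 < C₀)
    (hM1 : 1 ≤ M) :
    (δ / 2 ≤ M ∧ M + 1 ≤ (C₀ - δ - 1) / 2) ↔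
      ((∀ b, 2 ≤ b → b ≤ δ → Even b →
          (TriMetric M M b ∧ M + M + b < C₀) ∧
          (TriMetric (M + 1) (M + 1) b ∧ (M + 1) + (M + 1) + b < C₀)) ∧
       (∀ b, 1 ≤ b → b ≤ δ → Odd b →
          TriMetric M (M + 1) b ∧ M + (M + 1) + b < C₀)) :=
  stmt10_general δ C₀ M hδ hC₀e
end

section
/- Let δ ≥ 4 be even, K₁ ≤ δ/2, and consider the antipodal constraint that every triangle with one side δ has its other two sides x, y satisfying x + y = δ. Then the map sending a triangle (a,b,c) with a,b,c ≤ δ−1 to its antipodal companion (a, δ−b, δ−c) (reflecting through one vertex) maps allowed triangles of the class A^{δ−1}_{K₁, δ−K₁, 2δ+2, 2δ+1} to allowed triangles: (a,b,c) is metric with odd perimeter p satisfying 2K₁ < p < 2(δ−K₁) + 2min(a,b,c) and p ≤ 2δ−1, if and only if (a, δ−b, δ−c) has the same properties. -/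
/-!
Write `p = a + b + c`. An allowed triangle has odd perimeter, so the triangle inequalities are
strict, and `p < 2(δ − K₁) + 2·min(a,b,c)` says that each of `b + c − a`, `a + c − b`, `a + b − c`
is below `2(δ − K₁)`. Hence `(a,b,c)` is allowed iff `p` is odd and each of the four integers
`b + c − a`, `a + c − b`, `a + b − c`, `2δ − p` lies strictly between `0` and `2(δ − K₁)`:
`p ≤ 2δ − 1` and `2K₁ < p` are the two bounds on `2δ − p`. The companion `(a, δ − b, δ − c)`
merely permutes these four numbers, and for even `δ` it keeps the parity of the perimeter.
-/

/-- The triangle `(a,b,c)` is allowed in the class `A^{δ−1}_{K₁,δ−K₁,2δ+2,2δ+1}`: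
metric, with odd perimeter `p` satisfying `2K₁ < p < 2(δ−K₁) + 2·min(a,b,c)` and
`p ≤ 2δ − 1`. -/
def AllowedAnti (δ K₁ a b c : ℕ) : Prop :=
  (a ≤ b + c ∧ b ≤ a + c ∧ c ≤ a + b) ∧
  Odd (a + b + c) ∧
  2 * K₁ < a + b + c ∧
  a + b + c < 2 * (δ - K₁) + 2 * min a (min b c) ∧
  a + b + c ≤ 2 * δ - 1

def triangleDefects (δ a b c : ℕ) : List ℤ :=
  [(b : ℤ) + c - a, (a : ℤ) + c - b, (a : ℤ) + b - c, 2 * (δ : ℤ) - (a + b + c)]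

theorem allowedAnti_iff_defects (δ K₁ a b c : ℕ) :
    AllowedAnti δ K₁ a b c ↔ Odd (a + b + c) ∧
      ∀ t ∈ triangleDefects δ a b c, 0 < t ∧ t < 2 * ((δ - K₁ : ℕ) : ℤ) := by
  simp only [AllowedAnti, triangleDefects, List.mem_cons, List.not_mem_nil, or_false,
    forall_eq_or_imp, forall_eq, Nat.odd_iff]
  omega

theorem triangleDefects_companion_perm {δ b c : ℕ} (a : ℕ) (hb : b ≤ δ) (hc : c ≤ δ) :
    (triangleDefects δ a (δ - b) (δ - c)).Perm (triangleDefects δ a b c) := by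
  have h : triangleDefects δ a (δ - b) (δ - c) =
      [2 * (δ : ℤ) - (a + b + c), (a : ℤ) + b - c, (a : ℤ) + c - b, (b : ℤ) + c - a] := by
    simp only [triangleDefects, List.cons.injEq, and_true]
    omega
  rw [h]
  exact List.reverse_perm (triangleDefects δ a b c)

theorem odd_companion_perimeter_iff {δ b c : ℕ} (a : ℕ) (hδ : Even δ) (hb : b ≤ δ) (hc : c ≤ δ) :
    Odd (a + (δ - b) + (δ - c)) ↔ Odd (a + b + c) := by
  obtain ⟨d, rfl⟩ := hδ
  simp only [Nat.odd_iff]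
  omega

theorem stmt15_general (δ K₁ : ℕ) (hδe : Even δ)
    (a b c : ℕ) (hb2 : b ≤ δ - 1)
    (hc2 : c ≤ δ - 1) :
    AllowedAnti δ K₁ a b c ↔ AllowedAnti δ K₁ a (δ - b) (δ - c) := by
  have hb : b ≤ δ := hb2.trans (Nat.sub_le δ 1)
  have hc : c ≤ δ := hc2.trans (Nat.sub_le δ 1)
  rw [allowedAnti_iff_defects, allowedAnti_iff_defects, odd_companion_perimeter_iff a hδe hb hc]
  simp only [(triangleDefects_companion_perm a hb hc).mem_iff]

/-- For even `δ ≥ 4` and `K₁ ≤ δ/2`, the antipodal companion map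
`(a,b,c) ↦ (a, δ−b, δ−c)` sends allowed triangles of `A^{δ−1}_{K₁,δ−K₁,2δ+2,2δ+1}`
to allowed triangles and forbidden ones to forbidden ones. -/
theorem stmt15 (δ K₁ : ℕ) (hδ : 4 ≤ δ) (hδe : Even δ) (hK₁ : 1 ≤ K₁)
    (hK : 2 * K₁ ≤ δ)
    (a b c : ℕ) (ha1 : 1 ≤ a) (ha2 : a ≤ δ - 1) (hb1 : 1 ≤ b) (hb2 : b ≤ δ - 1)
    (hc1 : 1 ≤ c) (hc2 : c ≤ δ - 1) :
    AllowedAnti δ K₁ a b c ↔ AllowedAnti δ K₁ a (δ - b) (δ - c) :=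
  stmt15_general δ K₁ hδe a b c hb2 hc2
end

section
/- Let δ ≥ 3 and C₀ > 2δ+3 even, and let M be bipartite magic (⌊δ/2⌋ ≤ M, M+1 ≤ ⌊(C₀−δ−1)/2⌋). Let A and B be two finite metric spaces with integer distances at most δ in which all triangles have even perimeter less than C₀ and are metric. Fix x ∈ A, y ∈ B, and define d' on the disjoint union of A and B extending both metrics by: d'(x', y') = M if d_A(x,x') + d_B(y,y') is even, and d'(x',y') = M+1 otherwise, for x' ∈ A, y' ∈ B. Then every triangle of (A ⊔ B, d') is metric, has even perimeter, and has perimeter less than C₀; i.e., the disjoint union completes to a space in the bipartite class A^δ_{∞,0,C₀,2δ+1}. -/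
/-!
The cross distances lie in `{M, M + 1}` and have the parity of `d(x, a) + d(y, b)`. Since every
triangle of `A` through `x` has even perimeter, `d(a, a') ≡ d(x, a) + d(x, a') (mod 2)`, so every
triangle meeting both sides has even perimeter. The bound `δ ≤ 2M + 1` makes the two cross sides
long enough for the triangle inequality, and `2M + 2 ≤ C₀ - δ - 1` keeps the perimeter below `C₀`.
-/

/-- The distance on the disjoint union `A ⊕ B` extending `dA` and `dB`, where a cross
pair `(x', y')` gets distance `M` if `dA x x' + dB y y'` is even and `M + 1` otherwise. -/
def unionDist {A B : Type} (dA : A → A → ℕ) (dB : B → B → ℕ) (x : A) (y : B) (M : ℕ) :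
    A ⊕ B → A ⊕ B → ℕ
  | Sum.inl a, Sum.inl a' => dA a a'
  | Sum.inr b, Sum.inr b' => dB b b'
  | Sum.inl a, Sum.inr b' => if Even (dA x a + dB y b') then M else M + 1
  | Sum.inr b, Sum.inl a' => if Even (dA x a' + dB y b) then M else M + 1

/-- The triangles allowed in the class `A^δ_{∞,0,C₀,2δ+1}`. -/
def IsAdmissibleTriangle (C₀ u v w : ℕ) : Prop :=
  u ≤ v + w ∧ v ≤ w + u ∧ w ≤ u + v ∧ Even (u + v + w) ∧ u + v + w < C₀

theorem IsAdmissibleTriangle.rotate {C₀ u v w : ℕ} (h : IsAdmissibleTriangle C₀ u v w) :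
    IsAdmissibleTriangle C₀ v w u := by
  obtain ⟨huv, hvw, hwu, he, hC⟩ := h
  refine ⟨hvw, hwu, huv, ?_, by omega⟩
  rwa [show v + w + u = u + v + w by ring]

theorem isAdmissibleTriangle_of_metric {X : Type} {C₀ : ℕ} {d : X → X → ℕ}
    (hs : ∀ a b, d a b = d b a) (ht : ∀ a b c, d a c ≤ d a b + d b c)
    (he : ∀ a b c, Even (d a b + d b c + d c a)) (hC : ∀ a b c, d a b + d b c + d c a < C₀)
    (a b c : X) : IsAdmissibleTriangle C₀ (d a b) (d b c) (d c a) := by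
  have := ht a c b; have := ht b a c; have := ht c b a
  have := hs a c; have := hs b c; have := hs a b
  exact ⟨by omega, by omega, by omega, he a b c, hC a b c⟩

/-- The critical case is `d = δ = 2M + 1`: parity then forces one of the other sides to be
`M + 1`, so the triangle inequality still holds. -/
theorem isAdmissibleTriangle_of_magic {δ C₀ M d s t : ℕ} (hM1 : δ / 2 ≤ M)
    (hM2 : M + 1 ≤ (C₀ - δ - 1) / 2) (hd : d ≤ δ) (hpar : Even (d + s + t)) :
    IsAdmissibleTriangle C₀ d (M + s % 2) (M + t % 2) := by
  rw [Nat.even_iff] at hpar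
  refine ⟨by omega, by omega, by omega, Nat.even_iff.mpr (by omega), by omega⟩

theorem ite_even_eq_add_mod_two (M n : ℕ) : (if Even n then M else M + 1) = M + n % 2 := by
  rcases Nat.even_or_odd n with h | h
  · rw [if_pos h, Nat.even_iff.mp h, add_zero]
  · rw [if_neg (Nat.not_even_iff_odd.mpr h), Nat.odd_iff.mp h]

section unionDist

variable {A B : Type} {δ C₀ M : ℕ} {dA : A → A → ℕ} {dB : B → B → ℕ} (x : A) (y : B)

theorem unionDist_comm (hAs : ∀ a a', dA a a' = dA a' a) (hBs : ∀ b b', dB b b' = dB b' b)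
    (p q : A ⊕ B) : unionDist dA dB x y M p q = unionDist dA dB x y M q p := by
  rcases p with a | b <;> rcases q with a' | b' <;> simp only [unionDist, hAs, hBs]

variable {x y}

theorem unionDist_isAdmissibleTriangle_inl_inl_inr (hM1 : δ / 2 ≤ M) (hM2 : M + 1 ≤ (C₀ - δ - 1) / 2)
    (hAs : ∀ a a', dA a a' = dA a' a)
    (hAb : ∀ a a', dA a a' ≤ δ) (hAe : ∀ a a' a'', Even (dA a a' + dA a' a'' + dA a'' a))
    (a a' : A) (b : B) :
    IsAdmissibleTriangle C₀ (unionDist dA dB x y M (.inl a) (.inl a'))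
      (unionDist dA dB x y M (.inl a') (.inr b)) (unionDist dA dB x y M (.inr b) (.inl a)) := by
  simp only [unionDist, ite_even_eq_add_mod_two]
  refine isAdmissibleTriangle_of_magic hM1 hM2 (hAb a a') ?_
  have hpar := hAs a' x ▸ hAe a a' x
  rw [Nat.even_iff] at hpar ⊢
  omega

theorem unionDist_isAdmissibleTriangle_inr_inr_inl (hM1 : δ / 2 ≤ M) (hM2 : M + 1 ≤ (C₀ - δ - 1) / 2)
    (hBs : ∀ b b', dB b b' = dB b' b)
    (hBb : ∀ b b', dB b b' ≤ δ) (hBe : ∀ b b' b'', Even (dB b b' + dB b' b'' + dB b'' b))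
    (b b' : B) (a : A) :
    IsAdmissibleTriangle C₀ (unionDist dA dB x y M (.inr b) (.inr b'))
      (unionDist dA dB x y M (.inr b') (.inl a)) (unionDist dA dB x y M (.inl a) (.inr b)) := by
  simp only [unionDist, ite_even_eq_add_mod_two]
  refine isAdmissibleTriangle_of_magic hM1 hM2 (hBb b b') ?_
  have hpar := hBs b' y ▸ hBe b b' y
  rw [Nat.even_iff] at hpar ⊢
  omega

theorem unionDist_isAdmissibleTriangle (hM1 : δ / 2 ≤ M) (hM2 : M + 1 ≤ (C₀ - δ - 1) / 2)
    (hAs : ∀ a a', dA a a' = dA a' a) (hAb : ∀ a a', dA a a' ≤ δ)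
    (hAt : ∀ a a' a'', dA a a'' ≤ dA a a' + dA a' a'')
    (hAe : ∀ a a' a'', Even (dA a a' + dA a' a'' + dA a'' a))
    (hAC : ∀ a a' a'', dA a a' + dA a' a'' + dA a'' a < C₀)
    (hBs : ∀ b b', dB b b' = dB b' b) (hBb : ∀ b b', dB b b' ≤ δ)
    (hBt : ∀ b b' b'', dB b b'' ≤ dB b b' + dB b' b'')
    (hBe : ∀ b b' b'', Even (dB b b' + dB b' b'' + dB b'' b))
    (hBC : ∀ b b' b'', dB b b' + dB b' b'' + dB b'' b < C₀) (p q r : A ⊕ B) :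
    IsAdmissibleTriangle C₀ (unionDist dA dB x y M p q) (unionDist dA dB x y M q r)
      (unionDist dA dB x y M r p) := by
  have hAAB := unionDist_isAdmissibleTriangle_inl_inl_inr (dB := dB) (x := x) (y := y)
    hM1 hM2 hAs hAb hAe
  have hBBA := unionDist_isAdmissibleTriangle_inr_inr_inl (dA := dA) (x := x) (y := y)
    hM1 hM2 hBs hBb hBe
  rcases p with a | b <;> rcases q with a' | b' <;> rcases r with a'' | b''
  · exact isAdmissibleTriangle_of_metric hAs hAt hAe hAC a a' a''
  · exact hAAB a a' b''
  · exact (hAAB a'' a b').rotate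
  · exact (hBBA b' b'' a).rotate.rotate
  · exact (hAAB a' a'' b).rotate.rotate
  · exact (hBBA b'' b a').rotate
  · exact hBBA b b' a''
  · exact isAdmissibleTriangle_of_metric hBs hBt hBe hBC b b' b''

end unionDist

theorem stmt19_general {A B : Type}
    (δ C₀ M : ℕ)
    (hM1 : δ / 2 ≤ M) (hM2 : M + 1 ≤ (C₀ - δ - 1) / 2)
    (dA : A → A → ℕ) (dB : B → B → ℕ)
    (hAs : ∀ a a', dA a a' = dA a' a)
    (hAb : ∀ a a', dA a a' ≤ δ)
    (hAt : ∀ a a' a'', dA a a'' ≤ dA a a' + dA a' a'')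
    (hAe : ∀ a a' a'', Even (dA a a' + dA a' a'' + dA a'' a))
    (hAC : ∀ a a' a'', dA a a' + dA a' a'' + dA a'' a < C₀)
    (hBs : ∀ b b', dB b b' = dB b' b)
    (hBb : ∀ b b', dB b b' ≤ δ)
    (hBt : ∀ b b' b'', dB b b'' ≤ dB b b' + dB b' b'')
    (hBe : ∀ b b' b'', Even (dB b b' + dB b' b'' + dB b'' b))
    (hBC : ∀ b b' b'', dB b b' + dB b' b'' + dB b'' b < C₀)
    (x : A) (y : B) :
    ∀ p q r : A ⊕ B,
      unionDist dA dB x y M p r ≤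
          unionDist dA dB x y M p q + unionDist dA dB x y M q r ∧
      Even (unionDist dA dB x y M p q + unionDist dA dB x y M q r +
          unionDist dA dB x y M r p) ∧
      unionDist dA dB x y M p q + unionDist dA dB x y M q r +
          unionDist dA dB x y M r p < C₀ := by
  intro p q r
  obtain ⟨-, -, hpr, he, hC⟩ := unionDist_isAdmissibleTriangle (x := x) (y := y) hM1 hM2
    hAs hAb hAt hAe hAC hBs hBb hBt hBe hBC p q r
  exact ⟨unionDist_comm x y hAs hBs p r ▸ hpr, he, hC⟩

/-- Joint embedding for the bipartite class `A^δ_{∞,0,C₀,2δ+1}`: if `A` and `B` are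
finite integer metric spaces of diameter `≤ δ` in which every triangle is metric with
even perimeter `< C₀`, and `M` is bipartite magic, then every triangle of the disjoint
union equipped with `unionDist` is metric, has even perimeter, and has perimeter `< C₀`. -/
theorem stmt19 {A B : Type} [Finite A] [Finite B]
    (δ C₀ M : ℕ) (hδ : 3 ≤ δ) (hC₀e : Even C₀) (hC₀ : 2 * δ + 3 < C₀)
    (hM1 : δ / 2 ≤ M) (hM2 : M + 1 ≤ (C₀ - δ - 1) / 2)
    (dA : A → A → ℕ) (dB : B → B → ℕ)
    (hA0 : ∀ a a', dA a a' = 0 ↔ a = a') (hAs : ∀ a a', dA a a' = dA a' a)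
    (hAb : ∀ a a', dA a a' ≤ δ)
    (hAt : ∀ a a' a'', dA a a'' ≤ dA a a' + dA a' a'')
    (hAe : ∀ a a' a'', Even (dA a a' + dA a' a'' + dA a'' a))
    (hAC : ∀ a a' a'', dA a a' + dA a' a'' + dA a'' a < C₀)
    (hB0 : ∀ b b', dB b b' = 0 ↔ b = b') (hBs : ∀ b b', dB b b' = dB b' b)
    (hBb : ∀ b b', dB b b' ≤ δ)
    (hBt : ∀ b b' b'', dB b b'' ≤ dB b b' + dB b' b'')
    (hBe : ∀ b b' b'', Even (dB b b' + dB b' b'' + dB b'' b))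
    (hBC : ∀ b b' b'', dB b b' + dB b' b'' + dB b'' b < C₀)
    (x : A) (y : B) :
    ∀ p q r : A ⊕ B,
      unionDist dA dB x y M p r ≤
          unionDist dA dB x y M p q + unionDist dA dB x y M q r ∧
      Even (unionDist dA dB x y M p q + unionDist dA dB x y M q r +
          unionDist dA dB x y M r p) ∧
      unionDist dA dB x y M p q + unionDist dA dB x y M q r +
          unionDist dA dB x y M r p < C₀ :=
  stmt19_general δ C₀ M hM1 hM2 dA dB hAs hAb hAt hAe hAC hBs hBb hBt hBe hBC x y
end
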